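/- arXiv:1910.05204 — 2 statements merged into one kernel-verified Lean document; each statement's English description precedes it below -/
import Mathlib

section
/- With c^m_{μ,k} = ((−1)^k/k!)·(m!/(m−μ)!)·H_k(μ), one has for all m ≥ 0, k ≥ 1 and 1 ≤ μ ≤ m: k·c^m_{μ,k} − (m−μ+1)·c^m_{μ−1,k} + c^m_{μ,k−1} = 0. -/
open Finset

/-- Multiple harmonic sum `H_k(μ)`. -/
def mharm (k μ : ℕ) : ℚ :=
  ∑ f ∈ Finset.univ.filter (fun f : Fin μ → Fin k => ∀ i j, i ≤ j → f i ≤ f j),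
    ∏ i, (1 : ℚ) / ((f i : ℕ) + 1)

/-- `c^m_{μ,k} = ((−1)^k/k!)·(m!/(m−μ)!)·H_k(μ)`. -/
def cBM (m μ k : ℕ) : ℚ :=
  ((-1) ^ k / (k.factorial : ℚ)) * ((m.factorial : ℚ) / ((m - μ).factorial : ℚ)) * mharm k μ

/-!
Splitting the tuples `j_1 ≤ ⋯ ≤ j_{μ+1} ≤ k+1` according to whether `j_{μ+1} = k+1` gives
`H_{k+1}(μ+1) = H_k(μ+1) + H_{k+1}(μ)/(k+1)`. Writing `m!/(m-μ)!` as the falling factorial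
`m(m-1)⋯(m-μ+1)`, the factor `m-μ` of the recurrence turns `c^m_{μ,k+1}` into the same prefactor as
the other two terms, and the recurrence becomes this identity for `H`.
-/

lemma Fin.monotone_snoc_of_le {α : Type*} [Preorder α] {n : ℕ} {f : Fin n → α}
    (hf : Monotone f) {x : α} (hx : ∀ i, f i ≤ x) :
    Monotone (Fin.snoc (α := fun _ => α) f x) := by
  intro a b hab
  obtain ⟨b, rfl⟩ | rfl := b.eq_castSucc_or_eq_last
  · obtain ⟨a, rfl⟩ | rfl := a.eq_castSucc_or_eq_last
    · simpa only [Fin.snoc_castSucc] using hf (Fin.castSucc_le_castSucc_iff.1 hab)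
    · exact absurd hab (Fin.castSucc_lt_last b).not_ge
  · obtain ⟨a, rfl⟩ | rfl := a.eq_castSucc_or_eq_last
    · simpa only [Fin.snoc_castSucc, Fin.snoc_last] using hx a
    · exact le_rfl

lemma mharm_eq_sum_monotone (k μ : ℕ) :
    mharm k μ = ∑ f ∈ univ.filter (fun f : Fin μ → Fin k => Monotone f),
      ∏ i, (1 : ℚ) / ((f i : ℕ) + 1) :=
  rfl

lemma mharm_eq_sum_last_ne_last (k μ : ℕ) :
    mharm k (μ + 1) = ∑ f ∈ univ.filter (fun f : Fin (μ + 1) → Fin (k + 1) =>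
      Monotone f ∧ f (Fin.last μ) ≠ Fin.last k), ∏ i, (1 : ℚ) / ((f i : ℕ) + 1) := by
  have ne_last : ∀ f : Fin (μ + 1) → Fin (k + 1), Monotone f ∧ f (Fin.last μ) ≠ Fin.last k →
      ∀ j, f j ≠ Fin.last k := fun f hf j =>
    Fin.ne_last_of_lt ((hf.1 (Fin.le_last j)).trans_lt (Fin.lt_last_iff_ne_last.2 hf.2))
  rw [mharm_eq_sum_monotone]
  refine sum_bij' (fun g _ => Fin.castSucc ∘ g)
    (fun f hf => fun j => (f j).castPred (ne_last f (mem_filter.1 hf).2 j)) ?_ ?_ ?_ ?_ ?_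
  · intro g hg
    simp only [mem_filter, mem_univ, true_and] at hg ⊢
    exact ⟨Fin.strictMono_castSucc.monotone.comp hg, Fin.castSucc_ne_last _⟩
  · intro f hf
    simp only [mem_filter, mem_univ, true_and] at hf ⊢
    exact fun i j hij => Fin.castPred_le_castPred_iff.2 (hf.1 hij)
  · intros; rfl
  · intros; rfl
  · intros; simp

lemma mharm_eq_sum_last_eq_last (k μ : ℕ) :
    1 / ((k : ℚ) + 1) * mharm (k + 1) μ = ∑ f ∈ univ.filter (fun f : Fin (μ + 1) → Fin (k + 1) =>
      Monotone f ∧ f (Fin.last μ) = Fin.last k), ∏ i, (1 : ℚ) / ((f i : ℕ) + 1) := by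
  rw [mharm_eq_sum_monotone, mul_sum]
  refine sum_nbij' (fun g => Fin.snoc g (Fin.last k)) Fin.init ?_ ?_ ?_ ?_ ?_
  · intro g hg
    simp only [mem_filter, mem_univ, true_and] at hg ⊢
    exact ⟨Fin.monotone_snoc_of_le hg fun i => Fin.le_last _, Fin.snoc_last _ _⟩
  · intro f hf
    simp only [mem_filter, mem_univ, true_and] at hf ⊢
    exact hf.1.comp Fin.strictMono_castSucc.monotone
  · intro g _; exact Fin.init_snoc _ _
  · intro f hf
    simp only [mem_filter, mem_univ, true_and] at hf
    rw [← hf.2, Fin.snoc_init_self]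
  · intro g _
    rw [Fin.prod_univ_castSucc]
    simp only [Fin.snoc_castSucc, Fin.snoc_last, Fin.val_last]
    ring

lemma mharm_succ_succ (k μ : ℕ) :
    mharm (k + 1) (μ + 1) = mharm k (μ + 1) + 1 / ((k : ℚ) + 1) * mharm (k + 1) μ := by
  rw [mharm_eq_sum_monotone (k + 1), mharm_eq_sum_last_ne_last, mharm_eq_sum_last_eq_last,
    ← sum_filter_not_add_sum_filter _ (fun f => f (Fin.last μ) = Fin.last k),
    filter_filter, filter_filter]

lemma cBM_eq_descFactorial {m μ : ℕ} (k : ℕ) (h : μ ≤ m) :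
    cBM m μ k = (-1) ^ k / (k.factorial : ℚ) * m.descFactorial μ * mharm k μ := by
  rw [cBM, ← Nat.factorial_mul_descFactorial h, Nat.cast_mul,
    mul_div_cancel_left₀ _ (by positivity)]

theorem cBM_recurrence (m μ k : ℕ) (hk : 1 ≤ k) (hμ1 : 1 ≤ μ) (hμm : μ ≤ m) :
    (k : ℚ) * cBM m μ k - ((m : ℚ) - μ + 1) * cBM m (μ - 1) k + cBM m μ (k - 1) = 0 := by
  obtain ⟨k, rfl⟩ := Nat.exists_eq_add_of_le' hk
  obtain ⟨μ, rfl⟩ := Nat.exists_eq_add_of_le' hμ1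
  simp only [Nat.add_sub_cancel]
  rw [cBM_eq_descFactorial _ hμm, cBM_eq_descFactorial _ (by omega), cBM_eq_descFactorial _ hμm,
    Nat.descFactorial_succ, mharm_succ_succ, Nat.factorial_succ, pow_succ]
  push_cast [Nat.cast_sub (by omega : μ ≤ m)]
  field_simp
  ring
end

section
/- For each fixed k ≥ 0, the exponential generating function identity ∑_{m≥0} (S_{m,k}(x)/m!) s^m = ((−1)^k/k!)·F_k(s)·e^{sx}/(Γ(s−k)(e^{2πis}−1)) holds, where S_{m,k}(x) = ∑_{μ=0}^m {}_μQ_k(x)·c^m_{m−μ,k}. -/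
open Finset Complex Real

/-! Both factors on the right converge absolutely near `s = 0`: `F_k` because `H_k(μ) ≤ k^μ`,
and `∑ Q_m(x) s^m / m!` because it converges at some real `0 < ρ < 1` (a divergent series would
have sum `0`, but the expanded function does not vanish at `ρ - k`), hence absolutely on
`‖s‖ < ρ`. The left side is `(-1)^k/k!` times their Cauchy product, and the expansion of `Q` at
the point `s - k` identifies the second factor with `e^{sx}/(Γ(s-k)(e^{2πis}-1))`, since
`e^{2πis}` is `1`-periodic. -/

lemma mharm_nonneg (k μ : ℕ) : 0 ≤ mharm k μ :=
  Finset.sum_nonneg fun _ _ => Finset.prod_nonneg fun _ _ => by positivity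

lemma mharm_le_pow (k μ : ℕ) : mharm k μ ≤ (k : ℚ) ^ μ := by
  calc mharm k μ
      ≤ (Finset.univ.filter fun f : Fin μ → Fin k => ∀ i j, i ≤ j → f i ≤ f j).card • (1 : ℚ) :=
        Finset.sum_le_card_nsmul _ _ _ fun f _ =>
          Finset.prod_le_one (fun _ _ => by positivity) fun i _ =>
            div_le_one_of_le₀ (by simp) (by positivity)
    _ ≤ (Finset.univ : Finset (Fin μ → Fin k)).card • (1 : ℚ) :=
        nsmul_le_nsmul_left zero_le_one (Finset.card_filter_le _ _)
    _ = (k : ℚ) ^ μ := by simp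

lemma summable_norm_mharm_mul_pow (k : ℕ) {s : ℂ} (hs : k * ‖s‖ < 1) :
    Summable fun μ : ℕ => ‖(mharm k μ : ℂ) * s ^ μ‖ := by
  refine (summable_geometric_of_lt_one (by positivity) hs).of_nonneg_of_le
    (fun _ => norm_nonneg _) fun μ => ?_
  rw [norm_mul, norm_pow, mul_pow, Complex.norm_ratCast,
    abs_of_nonneg (by exact_mod_cast mharm_nonneg k μ)]
  gcongr
  exact_mod_cast mharm_le_pow k μ

lemma summable_norm_mul_pow_of_summable {𝕜 : Type*} [NormedField 𝕜] {a : ℕ → 𝕜} {z s : 𝕜}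
    (h : Summable fun m => a m * z ^ m) (hs : ‖s‖ < ‖z‖) :
    Summable fun m => ‖a m * s ^ m‖ := by
  obtain ⟨C, hC⟩ := h.tendsto_atTop_zero.norm.bddAbove_range
  have hz : 0 < ‖z‖ := (norm_nonneg s).trans_lt hs
  refine ((summable_geometric_of_lt_one (by positivity) ((div_lt_one hz).2 hs)).mul_left C)
    |>.of_nonneg_of_le (fun _ => norm_nonneg _) fun m => ?_
  calc ‖a m * s ^ m‖ = ‖a m * z ^ m‖ * (‖s‖ / ‖z‖) ^ m := by
        rw [norm_mul, norm_mul, norm_pow, norm_pow, div_pow]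
        field_simp
    _ ≤ C * (‖s‖ / ‖z‖) ^ m := by gcongr; exact hC (Set.mem_range_self m)

lemma Gamma_mul_exp_two_pi_I_sub_one_ne_zero {s : ℂ} (hs : ∀ n : ℤ, s ≠ n) :
    Gamma s * (exp (2 * π * I * s) - 1) ≠ 0 := by
  refine mul_ne_zero (Gamma_ne_zero fun m hm => hs (-m) (by simpa using hm)) ?_
  rw [sub_ne_zero]
  intro h
  obtain ⟨n, hn⟩ := Complex.exp_eq_one_iff.1 h
  exact hs n (mul_left_cancel₀ (by simp [Real.pi_ne_zero, I_ne_zero] : 2 * (π : ℂ) * I ≠ 0)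
    (by rw [hn]; ring))

lemma ofReal_sub_natCast_ne_intCast {ρ : ℝ} (h0 : 0 < ρ) (h1 : ρ < 1) (k : ℕ) (n : ℤ) :
    (ρ : ℂ) - k ≠ n := by
  intro h
  have hρ : ρ = ((n + k : ℤ) : ℝ) := by
    push_cast
    linear_combination (by exact_mod_cast h : ρ - k = (n : ℝ))
  rw [hρ] at h0 h1
  have : 0 < n + k := by exact_mod_cast h0
  have : n + k < 1 := by exact_mod_cast h1
  omega

lemma exp_two_pi_I_mul_sub_natCast (s : ℂ) (k : ℕ) :
    exp (2 * π * I * (s - k)) = exp (2 * π * I * s) := by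
  rw [show 2 * π * I * (s - k) = 2 * π * I * s - k * (2 * π * I) by ring]
  exact exp_periodic.sub_nat_mul_eq k

lemma sum_range_mul_cBM_div_factorial_mul_pow (k m : ℕ) (a : ℕ → ℂ) (s : ℂ) :
    (∑ μ ∈ Finset.range (m + 1), a μ * (cBM m (m - μ) k : ℂ)) / (m.factorial : ℂ) * s ^ m =
      ((-1) ^ k / (k.factorial : ℂ)) *
        ∑ ij ∈ antidiagonal m,
          ((mharm k ij.1 : ℂ) * s ^ ij.1) * (a ij.2 / (ij.2.factorial : ℂ) * s ^ ij.2) := by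
  rw [Finset.Nat.sum_antidiagonal_eq_sum_range_succ_mk,
    ← Finset.sum_range_reflect (fun μ => a μ * (cBM m (m - μ) k : ℂ)),
    Finset.sum_div, Finset.sum_mul, Finset.mul_sum]
  refine Finset.sum_congr rfl fun j hj => ?_
  obtain ⟨n, rfl⟩ := Nat.exists_eq_add_of_le (Nat.lt_succ_iff.1 (Finset.mem_range.1 hj))
  rw [show j + n + 1 - 1 - j = n by omega, Nat.add_sub_cancel_left, Nat.add_sub_cancel, pow_add]
  have : ((j + n).factorial : ℂ) ≠ 0 := Nat.cast_ne_zero.2 (Nat.factorial_ne_zero _)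
  push_cast [cBM, Nat.add_sub_cancel_left]
  field_simp

/-- Suppose `Q m x` are the Taylor coefficients (times `m!`) of
`e^{(s+k)x}/(Γ(s)(e^{2πis}−1))` at `s = −k`.  Then with
`S_{m,k}(x) = ∑_{μ=0}^m {}_μQ_k(x)·c^m_{m−μ,k}` and `F_k(s) = ∑_μ H_k(μ) s^μ`,
one has `∑_{m≥0}(S_{m,k}(x)/m!) s^m = ((−1)^k/k!)·F_k(s)·e^{sx}/(Γ(s−k)(e^{2πis}−1))`
as a Taylor expansion in `s` at `s = 0` (on a punctured disc). -/
theorem S_gen_fun_identity (k : ℕ) (Q : ℕ → ℂ → ℂ)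
    (hQ : ∀ x : ℂ, ∃ r > (0 : ℝ), ∀ s : ℂ, 0 < ‖s + (k : ℂ)‖ → ‖s + (k : ℂ)‖ < r →
      Complex.exp ((s + k) * x) /
          (Complex.Gamma s * (Complex.exp (2 * Real.pi * Complex.I * s) - 1)) =
        ∑' m : ℕ, (Q m x / (m.factorial : ℂ)) * (s + k) ^ m) :
    ∀ x : ℂ, ∃ r > (0 : ℝ), ∀ s : ℂ, 0 < ‖s‖ → ‖s‖ < r →
      ∑' m : ℕ, ((∑ μ ∈ Finset.range (m + 1), Q μ x * (cBM m (m - μ) k : ℂ)) /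
          (m.factorial : ℂ)) * s ^ m =
        ((-1) ^ k / (k.factorial : ℂ)) * (∑' μ : ℕ, (mharm k μ : ℂ) * s ^ μ) *
          (Complex.exp (s * x) /
            (Complex.Gamma (s - k) * (Complex.exp (2 * Real.pi * Complex.I * s) - 1))) := by
  intro x
  obtain ⟨r, hr, hser⟩ := hQ x
  obtain ⟨ρ, hρ0, hρr, hρ1⟩ : ∃ ρ : ℝ, 0 < ρ ∧ ρ < r ∧ ρ < 1 :=
    ⟨min r 1 / 2, by positivity, by linarith [min_le_left r 1, lt_min hr one_pos],
      by linarith [min_le_right r 1, lt_min hr one_pos]⟩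
  have hsumρ : Summable fun m => Q m x / (m.factorial : ℂ) * (ρ : ℂ) ^ m := by
    have hval := hser (ρ - k) (by simp [hρ0.ne']) (by simp [abs_of_pos hρ0, hρr])
    simp only [sub_add_cancel] at hval
    by_contra hdiv
    rw [tsum_eq_zero_of_not_summable hdiv] at hval
    exact div_ne_zero (Complex.exp_ne_zero _) (Gamma_mul_exp_two_pi_I_sub_one_ne_zero
      (ofReal_sub_natCast_ne_intCast hρ0 hρ1 k)) hval
  refine ⟨min ρ (1 / (k + 1)), by positivity, fun s hs0 hsr => ?_⟩
  have hsρ : ‖s‖ < ρ := hsr.trans_le (min_le_left _ _)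
  have hsk : k * ‖s‖ < 1 := by
    have := (lt_div_iff₀ (by positivity)).1 (hsr.trans_le (min_le_right _ _))
    nlinarith [norm_nonneg s]
  have hval := hser (s - k) (by simpa using hs0) (by simpa using hsρ.trans hρr)
  rw [sub_add_cancel, exp_two_pi_I_mul_sub_natCast] at hval
  rw [tsum_congr fun m => sum_range_mul_cBM_div_factorial_mul_pow k m (Q · x) s, tsum_mul_left,
    ← tsum_mul_tsum_eq_tsum_sum_antidiagonal_of_summable_norm
      (summable_norm_mharm_mul_pow k hsk)
      (summable_norm_mul_pow_of_summable hsumρ (by simpa [abs_of_pos hρ0] using hsρ)),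
    ← hval]
  ring
end
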